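/- (Section 5.2.2, stability of two coupled FDTD-Q regions.) Let two abstract FDTD-Q regions A and B be given, sharing the same real constants ℏ > 0 and Δt > 0: region A has data (NA, MA, symmetric HA, VA := Matrix.diagonal dA with positive entries, H⊥A, sequences ψRA, ψIA, gRA, gIA satisfying the update equations (UpdA),(UpdB), total probability PA, outward probability current IPA), and region B has analogous data (NB, MB, HB, VB, H⊥B, ψRB, ψIB, gRB, gIB, PB, IPB). Assume 𝒫A := Matrix.fromBlocks VA (-(Δt/(2*ℏ)) • HA) (-(Δt/(2*ℏ)) • HA) VA and the analogous 𝒫B are both positive definite, and that the coupling is probability-conserving: IPA n + IPB n = 0 for all n. Then for all n : ℕ: (i) PA n + PB n = PA 0 + PB 0; and (ii) ‖Sum.elim (ψRA n) (ψIA n)‖² ≤ (PA 0 + PB 0)/λmin(𝒫A), where λmin(𝒫A) is the smallest eigenvalue of 𝒫A and ‖·‖ is the Euclidean norm on Fin NA ⊕ Fin NA → ℝ. -/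

import Mathlib

/-!
Pairing the update for `ψR` with `ψR(n+1) + ψR n` and the one for `ψI` with
`ψI(n+1) + ψI n`, the symmetry of `V` and `H` telescopes the interior terms, so each region's
probability changes in one step by exactly `-Δt` times its outward current; a
probability-conserving coupling makes the sum constant. The probability of a region is the
quadratic form of its probability matrix `𝒫` in `(ψR, ψI)`: positive definiteness of `𝒫B` makes
`PB n ≥ 0`, hence `PA n ≤ PA 0 + PB 0`, and the Rayleigh bound `λmin(𝒫A) ‖x‖² ≤ xᵀ 𝒫A x` turns
this into the norm estimate.
-/

open Matrix

section Symmetric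

variable {ι : Type*} [Fintype ι] {M : Matrix ι ι ℝ}

theorem dotProduct_mulVec_comm_of_transpose_eq (hM : Mᵀ = M) (a b : ι → ℝ) :
    a ⬝ᵥ M *ᵥ b = b ⬝ᵥ M *ᵥ a := by
  rw [dotProduct_mulVec, ← mulVec_transpose, hM, dotProduct_comm]

theorem add_dotProduct_mulVec_sub_of_transpose_eq (hM : Mᵀ = M) (a b : ι → ℝ) :
    (a + b) ⬝ᵥ M *ᵥ (a - b) = a ⬝ᵥ M *ᵥ a - b ⬝ᵥ M *ᵥ b := by
  rw [mulVec_sub, dotProduct_sub, add_dotProduct, add_dotProduct,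
    dotProduct_mulVec_comm_of_transpose_eq hM b a]
  ring

theorem fromBlocks_smul_dotProduct_mulVec (hM : Mᵀ = M) (V : Matrix ι ι ℝ) (c : ℝ)
    (a b : ι → ℝ) :
    Sum.elim a b ⬝ᵥ fromBlocks V (c • M) (c • M) V *ᵥ Sum.elim a b
      = a ⬝ᵥ V *ᵥ a + b ⬝ᵥ V *ᵥ b + 2 * c * (b ⬝ᵥ M *ᵥ a) := by
  rw [fromBlocks_mulVec, sumElim_dotProduct_sumElim]
  simp only [Sum.elim_comp_inl, Sum.elim_comp_inr, dotProduct_add, smul_mulVec,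
    dotProduct_smul, smul_eq_mul, dotProduct_mulVec_comm_of_transpose_eq hM a b]
  ring

end Symmetric

section Spectrum

open scoped MatrixOrder

variable {ι : Type*} [Fintype ι] [DecidableEq ι] {M : Matrix ι ι ℝ}

theorem Matrix.IsHermitian.sInf_spectrum_mul_dotProduct_self_le (hM : M.IsHermitian)
    (x : ι → ℝ) : sInf (spectrum ℝ M) * (x ⬝ᵥ x) ≤ x ⬝ᵥ M *ᵥ x := by
  have hle : algebraMap ℝ (Matrix ι ι ℝ) (sInf (spectrum ℝ M)) ≤ M :=
    (algebraMap_le_iff_le_spectrum hM.isSelfAdjoint).2 fun _ h ↦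
      csInf_le M.finite_real_spectrum.bddBelow h
  have h := (Matrix.le_iff.1 hle).dotProduct_mulVec_nonneg x
  rw [Algebra.algebraMap_eq_smul_one, sub_mulVec, smul_mulVec, one_mulVec, dotProduct_sub,
    dotProduct_smul, smul_eq_mul] at h
  simpa using h

theorem Matrix.PosDef.sInf_spectrum_pos [Nonempty ι] (hM : M.PosDef) :
    0 < sInf (spectrum ℝ M) := by
  have hne : (spectrum ℝ M).Nonempty := by
    rw [hM.1.spectrum_real_eq_range_eigenvalues]
    exact Set.range_nonempty _
  exact hM.isStrictlyPositive.spectrum_pos (hne.csInf_mem M.finite_real_spectrum)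

/-- For empty `ι` both sides are `0`, since `sInf ∅ = 0` and `c / 0 = 0`. -/
theorem Matrix.PosDef.dotProduct_self_le_div_sInf_spectrum (hM : M.PosDef) {x : ι → ℝ} {c : ℝ}
    (hx : x ⬝ᵥ M *ᵥ x ≤ c) : x ⬝ᵥ x ≤ c / sInf (spectrum ℝ M) := by
  cases isEmpty_or_nonempty ι with
  | inl _ => simp [dotProduct]
  | inr _ =>
    rw [le_div_iff₀ hM.sInf_spectrum_pos, mul_comm]
    exact (hM.1.sInf_spectrum_mul_dotProduct_self_le x).trans hx

end Spectrum

theorem EuclideanSpace.norm_equiv_symm_sq {ι : Type*} [Fintype ι] (x : ι → ℝ) :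
    ‖(EuclideanSpace.equiv ι ℝ).symm x‖ ^ 2 = x ⬝ᵥ x := by
  rw [EuclideanSpace.norm_sq_eq]
  simp [dotProduct, sq]

noncomputable section

namespace FDTDQ

variable {ι κ : Type*} [Fintype ι] [Fintype κ]

def totalProbability (ℏ Δt : ℝ) (V H : Matrix ι ι ℝ) (ψR ψI : ι → ℝ) : ℝ :=
  ψR ⬝ᵥ V *ᵥ ψR + ψI ⬝ᵥ V *ᵥ ψI - (Δt / ℏ) * (ψI ⬝ᵥ H *ᵥ ψR)

def outwardCurrent (ℏ : ℝ) (Hb : Matrix ι κ ℝ) (ψR ψI ψR' ψI' : ι → ℝ) (gR gI : κ → ℝ) : ℝ :=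
  (2 / ℏ) * (((ψR' + ψR) / 2) ⬝ᵥ Hb *ᵥ gI - ((ψI' + ψI) / 2) ⬝ᵥ Hb *ᵥ gR)

def probabilityMatrix (ℏ Δt : ℝ) (V H : Matrix ι ι ℝ) : Matrix (ι ⊕ ι) (ι ⊕ ι) ℝ :=
  fromBlocks V (-(Δt / (2 * ℏ)) • H) (-(Δt / (2 * ℏ)) • H) V

theorem totalProbability_eq_dotProduct_probabilityMatrix_mulVec {H : Matrix ι ι ℝ}
    (hH : Hᵀ = H) (ℏ Δt : ℝ) (V : Matrix ι ι ℝ) (ψR ψI : ι → ℝ) :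
    totalProbability ℏ Δt V H ψR ψI
      = Sum.elim ψR ψI ⬝ᵥ probabilityMatrix ℏ Δt V H *ᵥ Sum.elim ψR ψI := by
  rw [probabilityMatrix, fromBlocks_smul_dotProduct_mulVec hH, totalProbability]
  ring

theorem totalProbability_nonneg {ℏ Δt : ℝ} {V H : Matrix ι ι ℝ} (hH : Hᵀ = H)
    (hP : (probabilityMatrix ℏ Δt V H).PosSemidef) (ψR ψI : ι → ℝ) :
    0 ≤ totalProbability ℏ Δt V H ψR ψI := by
  rw [totalProbability_eq_dotProduct_probabilityMatrix_mulVec hH]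
  simpa using hP.dotProduct_mulVec_nonneg (Sum.elim ψR ψI)

theorem totalProbability_sub_eq {ℏ Δt : ℝ} (hℏ : ℏ ≠ 0) {V H : Matrix ι ι ℝ}
    (hV : Vᵀ = V) (hH : Hᵀ = H) (Hb : Matrix ι κ ℝ) {ψR ψI ψR' ψI' : ι → ℝ} {gR gI : κ → ℝ}
    (hUpdA : ℏ • V *ᵥ (ψR' - ψR) = Δt • (H *ᵥ ψI' - Hb *ᵥ gI))
    (hUpdB : ℏ • V *ᵥ (ψI' - ψI) = Δt • (-(H *ᵥ ψR) + Hb *ᵥ gR)) :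
    totalProbability ℏ Δt V H ψR' ψI' - totalProbability ℏ Δt V H ψR ψI
      = -Δt * outwardCurrent ℏ Hb ψR ψI ψR' ψI' gR gI := by
  have hR := congrArg ((ψR' + ψR) ⬝ᵥ ·) hUpdA
  have hI := congrArg ((ψI' + ψI) ⬝ᵥ ·) hUpdB
  simp only [dotProduct_smul, smul_eq_mul, add_dotProduct_mulVec_sub_of_transpose_eq hV,
    dotProduct_add, dotProduct_sub, dotProduct_neg, add_dotProduct] at hR hI
  rw [dotProduct_mulVec_comm_of_transpose_eq hH ψR' ψI',
    dotProduct_mulVec_comm_of_transpose_eq hH ψR ψI'] at hR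
  have half (v w : ι → ℝ) : (v / 2) ⬝ᵥ w = (v ⬝ᵥ w) / 2 := by
    simp only [dotProduct, Pi.div_apply, Pi.ofNat_apply, Finset.sum_div, div_mul_eq_mul_div]
  rw [totalProbability, totalProbability, outwardCurrent, half, half, add_dotProduct,
    add_dotProduct]
  field_simp
  linear_combination hR + hI

end FDTDQ

end

theorem fdtdq_coupled_regions_stability
    (NA MA NB MB : ℕ) (ℏ Δt : ℝ) (hℏ : 0 < ℏ)
    -- region A data
    (HA : Matrix (Fin NA) (Fin NA) ℝ) (hHA : HAᵀ = HA)
    (HbA : Matrix (Fin NA) (Fin MA) ℝ)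
    (dA : Fin NA → ℝ)
    (ψRA ψIA : ℕ → (Fin NA → ℝ)) (gRA gIA : ℕ → (Fin MA → ℝ))
    (hUpdAA : ∀ n : ℕ, ℏ • (Matrix.diagonal dA).mulVec (ψRA (n+1) - ψRA n)
        = Δt • (HA.mulVec (ψIA (n+1)) - HbA.mulVec (gIA n)))
    (hUpdBA : ∀ n : ℕ, ℏ • (Matrix.diagonal dA).mulVec (ψIA (n+1) - ψIA n)
        = Δt • (-(HA.mulVec (ψRA n)) + HbA.mulVec (gRA n)))
    -- region B data
    (HB : Matrix (Fin NB) (Fin NB) ℝ) (hHB : HBᵀ = HB)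
    (HbB : Matrix (Fin NB) (Fin MB) ℝ)
    (dB : Fin NB → ℝ)
    (ψRB ψIB : ℕ → (Fin NB → ℝ)) (gRB gIB : ℕ → (Fin MB → ℝ))
    (hUpdAB : ∀ n : ℕ, ℏ • (Matrix.diagonal dB).mulVec (ψRB (n+1) - ψRB n)
        = Δt • (HB.mulVec (ψIB (n+1)) - HbB.mulVec (gIB n)))
    (hUpdBB : ∀ n : ℕ, ℏ • (Matrix.diagonal dB).mulVec (ψIB (n+1) - ψIB n)
        = Δt • (-(HB.mulVec (ψRB n)) + HbB.mulVec (gRB n)))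
    -- probability matrices and their positive definiteness
    (PmatA : Matrix (Fin NA ⊕ Fin NA) (Fin NA ⊕ Fin NA) ℝ)
    (hPmatA : PmatA = Matrix.fromBlocks (Matrix.diagonal dA) (-(Δt/(2*ℏ)) • HA)
        (-(Δt/(2*ℏ)) • HA) (Matrix.diagonal dA))
    (hPDA : PmatA.PosDef)
    (PmatB : Matrix (Fin NB ⊕ Fin NB) (Fin NB ⊕ Fin NB) ℝ)
    (hPmatB : PmatB = Matrix.fromBlocks (Matrix.diagonal dB) (-(Δt/(2*ℏ)) • HB)
        (-(Δt/(2*ℏ)) • HB) (Matrix.diagonal dB))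
    (hPDB : PmatB.PosDef)
    -- total probabilities and outward probability currents
    (PA : ℕ → ℝ)
    (hPA : ∀ n : ℕ, PA n = ψRA n ⬝ᵥ (Matrix.diagonal dA).mulVec (ψRA n)
        + ψIA n ⬝ᵥ (Matrix.diagonal dA).mulVec (ψIA n)
        - (Δt/ℏ) * (ψIA n ⬝ᵥ HA.mulVec (ψRA n)))
    (PB : ℕ → ℝ)
    (hPB : ∀ n : ℕ, PB n = ψRB n ⬝ᵥ (Matrix.diagonal dB).mulVec (ψRB n)
        + ψIB n ⬝ᵥ (Matrix.diagonal dB).mulVec (ψIB n)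
        - (Δt/ℏ) * (ψIB n ⬝ᵥ HB.mulVec (ψRB n)))
    (IPA : ℕ → ℝ)
    (hIPA : ∀ n : ℕ, IPA n = (2/ℏ) * (((ψRA (n+1) + ψRA n)/2) ⬝ᵥ HbA.mulVec (gIA n)
        - ((ψIA (n+1) + ψIA n)/2) ⬝ᵥ HbA.mulVec (gRA n)))
    (IPB : ℕ → ℝ)
    (hIPB : ∀ n : ℕ, IPB n = (2/ℏ) * (((ψRB (n+1) + ψRB n)/2) ⬝ᵥ HbB.mulVec (gIB n)
        - ((ψIB (n+1) + ψIB n)/2) ⬝ᵥ HbB.mulVec (gRB n)))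
    -- probability-conserving coupling
    (hcoupling : ∀ n : ℕ, IPA n + IPB n = 0) :
    (∀ n : ℕ, PA n + PB n = PA 0 + PB 0)
    ∧ (∀ n : ℕ,
        ‖(EuclideanSpace.equiv (Fin NA ⊕ Fin NA) ℝ).symm (Sum.elim (ψRA n) (ψIA n))‖^2
          ≤ (PA 0 + PB 0) / sInf (spectrum ℝ PmatA)) := by
  obtain rfl : PmatA = FDTDQ.probabilityMatrix ℏ Δt (diagonal dA) HA := hPmatA
  obtain rfl : PmatB = FDTDQ.probabilityMatrix ℏ Δt (diagonal dB) HB := hPmatB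
  have stepA (n : ℕ) : PA (n + 1) - PA n = -Δt * IPA n := by
    rw [hPA, hPA, hIPA]
    exact FDTDQ.totalProbability_sub_eq hℏ.ne' (diagonal_transpose dA) hHA HbA
      (hUpdAA n) (hUpdBA n)
  have stepB (n : ℕ) : PB (n + 1) - PB n = -Δt * IPB n := by
    rw [hPB, hPB, hIPB]
    exact FDTDQ.totalProbability_sub_eq hℏ.ne' (diagonal_transpose dB) hHB HbB
      (hUpdAB n) (hUpdBB n)
  have conserved (n : ℕ) : PA n + PB n = PA 0 + PB 0 := by
    induction n with
    | zero => rfl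
    | succ n ih => linear_combination ih + stepA n + stepB n - Δt * hcoupling n
  refine ⟨conserved, fun n ↦ ?_⟩
  have hPBn : 0 ≤ PB n := hPB n ▸ FDTDQ.totalProbability_nonneg hHB hPDB.posSemidef _ _
  rw [EuclideanSpace.norm_equiv_symm_sq]
  refine hPDA.dotProduct_self_le_div_sInf_spectrum ?_
  have hPAn : PA n = FDTDQ.totalProbability ℏ Δt (diagonal dA) HA (ψRA n) (ψIA n) := hPA n
  rw [← FDTDQ.totalProbability_eq_dotProduct_probabilityMatrix_mulVec hHA, ← hPAn]
  linarith [conserved n]
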